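/- Let Y, Ŷ, A, D be as above with P(Ŷ = Y | D = 1) = 1. Fix y, ŷ ∈ [K], let p_y⁺ = P(Y=y, A=1), p_y = P(Y=y) with 0 < p_y⁺ < p_y, p_D = P(D=1), q_y = P(Y=y | D=1), q_y⁺ = P(Y=y, A=1 | D=1), C⁺ = P(Ŷ=ŷ | D=0, Y=y, A=1), C⁻ = P(Ŷ=ŷ | D=0, Y=y, A=0). Then the equalized odds gap Δeq.odds(y,ŷ) := P(Ŷ=ŷ | A=1, Y=y) − P(Ŷ=ŷ | A=0, Y=y) equals (p_D / (p_y⁺(p_y − p_y⁺)))·(C⁺ − 𝟙{y=ŷ})·(q_y p_y⁺ − p_y q_y⁺) + (C⁺ − C⁻)·(1 − p_D(q_y − q_y⁺)/(p_y − p_y⁺)). -/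

import Mathlib

/-!
Split each group {Y = y, A = a} according to D. On D = 1 memorization makes Ŷ = Y almost surely,
so P(Ŷ = ŷ, Y = y, A = a, D = 1) = 𝟙{y = ŷ} s_a with s_a = P(Y = y, A = a, D = 1), while on D = 0
the same probability is C_a (P(Y = y, A = a) - s_a), where C₁ = C⁺ and C₀ = C⁻. Hence
P(Ŷ = ŷ | Y = y, A = a) = C_a + (𝟙{y = ŷ} - C_a) s_a / P(Y = y, A = a), with s₁ = p_D q_y⁺ and
s₀ = p_D (q_y - q_y⁺), and the gap formula becomes a rational identity.
-/

open scoped BigOperators Classical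

noncomputable def pr {Ω : Type*} [Fintype Ω] (P : Ω → ℝ) (E : Set Ω) : ℝ :=
  ∑ ω, if ω ∈ E then P ω else 0

noncomputable def cpr {Ω : Type*} [Fintype Ω] (P : Ω → ℝ) (E F : Set Ω) : ℝ :=
  pr P (E ∩ F) / pr P F

section

variable {Ω : Type*} [Fintype Ω] {P : Ω → ℝ}

@[simp]
lemma pr_empty : pr P ∅ = 0 := by
  simp [pr]

lemma pr_inter_add_pr_inter_compl (E S : Set Ω) : pr P (E ∩ S) + pr P (E ∩ Sᶜ) = pr P E := by
  unfold pr
  rw [← Finset.sum_add_distrib]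
  refine Finset.sum_congr rfl fun ω _ => ?_
  by_cases hE : ω ∈ E <;> by_cases hS : ω ∈ S <;> simp [hE, hS]

lemma pr_nonneg (hP : ∀ ω, 0 ≤ P ω) (E : Set Ω) : 0 ≤ pr P E :=
  Finset.sum_nonneg fun ω _ => by split_ifs <;> simp [hP ω]

lemma pr_mono (hP : ∀ ω, 0 ≤ P ω) {E F : Set Ω} (h : E ⊆ F) : pr P E ≤ pr P F :=
  Finset.sum_le_sum fun ω _ => by
    by_cases hE : ω ∈ E
    · simp [hE, h hE]
    · split_ifs <;> simp [hP ω]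

/-- Holds also when `pr P F = 0`, where `cpr P E F` is the junk value `0`. -/
lemma cpr_mul_pr (hP : ∀ ω, 0 ≤ P ω) (E F : Set Ω) : cpr P E F * pr P F = pr P (E ∩ F) := by
  by_cases hF : pr P F = 0
  · have := pr_mono hP (Set.inter_subset_right : E ∩ F ⊆ F)
    rw [hF, mul_zero]
    linarith [pr_nonneg hP (E ∩ F)]
  · exact div_mul_cancel₀ _ hF

lemma pr_inter_inter_eq_of_cpr_eq_one (hP : ∀ ω, 0 ≤ P ω) {M D : Set Ω} (h : cpr P M D = 1)
    (E : Set Ω) : pr P (E ∩ M ∩ D) = pr P (E ∩ D) := by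
  have hD : pr P D ≠ 0 := fun hD => by simp [cpr, hD] at h
  have hMD : pr P (M ∩ D) = pr P D := by rwa [cpr, div_eq_one_iff_eq hD] at h
  have hnull : pr P (D ∩ Mᶜ) = 0 := by
    have hsplit := pr_inter_add_pr_inter_compl (P := P) D M
    rw [Set.inter_comm D M] at hsplit
    linarith
  have hEnull : pr P (E ∩ D ∩ Mᶜ) = 0 :=
    le_antisymm (hnull ▸ pr_mono hP (by intro ω; simp_all)) (pr_nonneg hP _)
  rw [← pr_inter_add_pr_inter_compl (E ∩ D) M, hEnull, add_zero, Set.inter_right_comm]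

lemma pr_label_inter_eq_of_memorized {α : Type*} [DecidableEq α] (hP : ∀ ω, 0 ≤ P ω)
    {Y Yh : Ω → α} {D : Set Ω} (hmem : cpr P {ω | Yh ω = Y ω} D = 1) {y yh : α} {G : Set Ω}
    (hG : G ⊆ {ω | Y ω = y}) :
    pr P ({ω | Yh ω = yh} ∩ (G ∩ D)) = (if y = yh then 1 else 0) * pr P (G ∩ D) := by
  have hlabel : {ω | Yh ω = yh} ∩ G ∩ {ω | Yh ω = Y ω} =
      if y = yh then G ∩ {ω | Yh ω = Y ω} else ∅ := by
    ext ω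
    have := @hG ω
    split_ifs <;> grind
  rw [← Set.inter_assoc, ← pr_inter_inter_eq_of_cpr_eq_one hP hmem, hlabel]
  split_ifs
  · rw [pr_inter_inter_eq_of_cpr_eq_one hP hmem, one_mul]
  · rw [Set.empty_inter, pr_empty, zero_mul]

lemma cpr_eq_of_pr_inter_eq_mul (hP : ∀ ω, 0 ≤ P ω) {E G D : Set Ω} {δ : ℝ}
    (hδ : pr P (E ∩ (G ∩ D)) = δ * pr P (G ∩ D)) (hG : pr P G ≠ 0) :
    cpr P E G = cpr P E (Dᶜ ∩ G) + (δ - cpr P E (Dᶜ ∩ G)) * (pr P (G ∩ D) / pr P G) := by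
  have hEG := pr_inter_add_pr_inter_compl (P := P) (E ∩ G) D
  have hGsplit := pr_inter_add_pr_inter_compl (P := P) G D
  have hC := cpr_mul_pr hP E (Dᶜ ∩ G)
  rw [Set.inter_assoc, hδ, Set.inter_assoc, Set.inter_comm G Dᶜ, ← hC] at hEG
  rw [Set.inter_comm G Dᶜ, ← eq_sub_iff_add_eq'] at hGsplit
  rw [cpr, ← hEG, hGsplit]
  field_simp
  ring

end

theorem stmt_2_general {Ω : Type*} [Fintype Ω] (P : Ω → ℝ)
    (hP0 : ∀ ω, 0 ≤ P ω)
    {K : ℕ} (Y Yh : Ω → Fin K) (A D : Ω → Bool)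
    (hmem : cpr P {ω | Yh ω = Y ω} {ω | D ω = true} = 1)
    (y yh : Fin K)
    (pD py pyp qy qyp Cp Cm : ℝ)
    (hpD : pD = pr P {ω | D ω = true})
    (hpy : py = pr P {ω | Y ω = y})
    (hpyp : pyp = pr P ({ω | Y ω = y} ∩ {ω | A ω = true}))
    (hpyp0 : 0 < pyp) (hpyppy : pyp < py)
    (hqy : qy = cpr P {ω | Y ω = y} {ω | D ω = true})
    (hqyp : qyp = cpr P ({ω | Y ω = y} ∩ {ω | A ω = true}) {ω | D ω = true})
    (hCp : Cp = cpr P {ω | Yh ω = yh} ({ω | D ω = false} ∩ ({ω | Y ω = y} ∩ {ω | A ω = true})))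
    (hCm : Cm = cpr P {ω | Yh ω = yh} ({ω | D ω = false} ∩ ({ω | Y ω = y} ∩ {ω | A ω = false}))) :
    cpr P {ω | Yh ω = yh} ({ω | A ω = true} ∩ {ω | Y ω = y})
      - cpr P {ω | Yh ω = yh} ({ω | A ω = false} ∩ {ω | Y ω = y})
      = pD / (pyp * (py - pyp)) * (Cp - (if y = yh then (1:ℝ) else 0)) * (qy * pyp - py * qyp)
        + (Cp - Cm) * (1 - pD * (qy - qyp) / (py - pyp)) := by
  set Yy := {ω | Y ω = y}
  set A1 := {ω | A ω = true}
  set D1 := {ω | D ω = true}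
  have hA0 : {ω | A ω = false} = A1ᶜ := by ext; simp [A1]
  have hD0 : {ω | D ω = false} = D1ᶜ := by ext; simp [D1]
  rw [hA0, hD0] at hCm
  rw [hD0] at hCp
  have hpy_sub_ne : py - pyp ≠ 0 := (sub_pos.2 hpyppy).ne'
  have hpy0 : pr P (Yy ∩ A1ᶜ) = py - pyp := by
    rw [hpy, hpyp, ← pr_inter_add_pr_inter_compl Yy A1, add_sub_cancel_left]
  have hs1 : pr P (Yy ∩ A1 ∩ D1) = pD * qyp := by
    rw [hpD, hqyp, mul_comm, cpr_mul_pr hP0]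
  have hs0 : pr P (Yy ∩ A1ᶜ ∩ D1) = pD * (qy - qyp) := by
    rw [mul_sub, ← hs1, hpD, hqy, mul_comm, cpr_mul_pr hP0, eq_sub_iff_add_eq',
      Set.inter_right_comm Yy A1 D1, Set.inter_right_comm Yy A1ᶜ D1, pr_inter_add_pr_inter_compl]
  have hgroup1 := cpr_eq_of_pr_inter_eq_mul hP0
    (pr_label_inter_eq_of_memorized hP0 hmem (yh := yh) (G := Yy ∩ A1) Set.inter_subset_left)
    (hpyp ▸ hpyp0.ne')
  have hgroup0 := cpr_eq_of_pr_inter_eq_mul hP0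
    (pr_label_inter_eq_of_memorized hP0 hmem (yh := yh) (G := Yy ∩ A1ᶜ) Set.inter_subset_left)
    (hpy0 ▸ hpy_sub_ne)
  rw [Set.inter_comm A1, hA0, Set.inter_comm A1ᶜ, hgroup1, hgroup0, ← hCp, ← hCm, hs1, hs0, hpy0,
    ← hpyp]
  field_simp
  ring

/-- equalized odds gap of the memorizing classifier. -/
theorem stmt_2 {Ω : Type*} [Fintype Ω] (P : Ω → ℝ)
    (hP0 : ∀ ω, 0 ≤ P ω) (hP1 : ∑ ω, P ω = 1)
    {K : ℕ} (Y Yh : Ω → Fin K) (A D : Ω → Bool)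
    (hmem : cpr P {ω | Yh ω = Y ω} {ω | D ω = true} = 1)
    (y yh : Fin K)
    (hD1 : 0 < pr P {ω | D ω = true})
    (hYA1 : 0 < pr P ({ω | Y ω = y} ∩ {ω | A ω = true}))
    (hYA0 : 0 < pr P ({ω | Y ω = y} ∩ {ω | A ω = false}))
    (hD0YA1 : 0 < pr P ({ω | D ω = false} ∩ ({ω | Y ω = y} ∩ {ω | A ω = true})))
    (hD0YA0 : 0 < pr P ({ω | D ω = false} ∩ ({ω | Y ω = y} ∩ {ω | A ω = false})))
    (pD py pyp qy qyp Cp Cm : ℝ)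
    (hpD : pD = pr P {ω | D ω = true})
    (hpy : py = pr P {ω | Y ω = y})
    (hpyp : pyp = pr P ({ω | Y ω = y} ∩ {ω | A ω = true}))
    (hpyp0 : 0 < pyp) (hpyppy : pyp < py)
    (hqy : qy = cpr P {ω | Y ω = y} {ω | D ω = true})
    (hqyp : qyp = cpr P ({ω | Y ω = y} ∩ {ω | A ω = true}) {ω | D ω = true})
    (hCp : Cp = cpr P {ω | Yh ω = yh} ({ω | D ω = false} ∩ ({ω | Y ω = y} ∩ {ω | A ω = true})))
    (hCm : Cm = cpr P {ω | Yh ω = yh} ({ω | D ω = false} ∩ ({ω | Y ω = y} ∩ {ω | A ω = false}))) :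
    cpr P {ω | Yh ω = yh} ({ω | A ω = true} ∩ {ω | Y ω = y})
      - cpr P {ω | Yh ω = yh} ({ω | A ω = false} ∩ {ω | Y ω = y})
      = pD / (pyp * (py - pyp)) * (Cp - (if y = yh then (1:ℝ) else 0)) * (qy * pyp - py * qyp)
        + (Cp - Cm) * (1 - pD * (qy - qyp) / (py - pyp)) :=
  stmt_2_general P hP0 Y Yh A D hmem y yh pD py pyp qy qyp Cp Cm hpD hpy hpyp hpyp0 hpyppy hqy hqyp
    hCp hCm
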